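/- arXiv:2601.03987 — 4 statements merged into one kernel-verified Lean document; each statement's English description precedes it below -/
import Mathlib

section
/- Let M = [[A,B],[C,D]] be a 2n×2n unitary matrix written in n×n block form, and suppose the blocks A and D are invertible. Then det M = det D / det(A*) and det M = det A / det(D*). -/
open MeasureTheory Matrix Filter
open scoped Real ENNReal Topology ComplexOrder

noncomputable section

namespace NLFT

instance : MeasurableSpace Circle := borel Circle
instance : BorelSpace Circle := ⟨rfl⟩

/-- The Haar probability measure on the unit circle `𝕋`. -/
def μ : Measure Circle :=
  Measure.map AddCircle.toCircle (@AddCircle.haarAddCircle (2 * Real.pi) ⟨Real.two_pi_pos⟩)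

/-- `n × n` complex matrices. -/
abbrev Mat (n : ℕ) := Matrix (Fin n) (Fin n) ℂ

/-- `2n × 2n` complex matrices, written in `2 × 2` block form. -/
abbrev Mat2 (n : ℕ) := Matrix (Fin n ⊕ Fin n) (Fin n ⊕ Fin n) ℂ

/-- The Hilbert–Schmidt norm `‖·‖₂` of a matrix. -/
def hsNorm {ι κ : Type*} [Fintype ι] [Fintype κ] (M : Matrix ι κ ℂ) : ℝ :=
  Real.sqrt (∑ i, ∑ j, ‖M i j‖ ^ 2)

/-- The operator norm `‖·‖_∞` (largest singular value) of a matrix. -/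
def opNorm {ι : Type*} [Fintype ι] [DecidableEq ι] (M : Matrix ι ι ℂ) : ℝ :=
  ‖toEuclideanCLM (𝕜 := ℂ) M‖

/-- A matrix is contractive if its operator norm is `< 1`. -/
def Contractive {ι : Type*} [Fintype ι] [DecidableEq ι] (M : Matrix ι ι ℂ) : Prop :=
  opNorm M < 1

/-- Membership in `𝓖₀` (upper triangular, `a = 0`) or `𝓖₁` (lower triangular, `a = 1`):
triangular with strictly positive (real) diagonal entries. -/
def Triangular {n : ℕ} (a : Fin 2) (M : Mat n) : Prop :=
  (∀ i j : Fin n, (if a = 0 then j < i else i < j) → M i j = 0) ∧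
  ∀ i, 0 < (M i i).re ∧ (M i i).im = 0

/-- A square matrix is unitary. -/
def IsUnitary {ι : Type*} [Fintype ι] [DecidableEq ι] (M : Matrix ι ι ℂ) : Prop :=
  Mᴴ * M = 1

/-- A square matrix is special unitary. -/
def IsSU {ι : Type*} [Fintype ι] [DecidableEq ι] (M : Matrix ι ι ℂ) : Prop :=
  IsUnitary M ∧ M.det = 1

/-- Membership in `SU_α(2n)`. -/
def IsSUa {n : ℕ} (α : Fin 2 → Fin 2) (M : Mat2 n) : Prop :=
  IsSU M ∧ Triangular (α 0) M.toBlocks₁₁ ∧ Triangular (α 1) M.toBlocks₂₂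

/-- The `k`-th Fourier coefficient `X̂(k) = ∫_𝕋 X(z) z^{-k}` of a matrix-valued function,
computed entrywise. -/
def mFourierCoeff {ι κ : Type*} [Fintype ι] [Fintype κ] (X : Circle → Matrix ι κ ℂ) (k : ℤ) :
    Matrix ι κ ℂ :=
  Matrix.of fun i j => ∫ z : Circle, (z : ℂ) ^ (-k) * X z i j ∂μ

/-- All entries square integrable on the circle. -/
def MemL2 {ι κ : Type*} [Fintype ι] [Fintype κ] (X : Circle → Matrix ι κ ℂ) : Prop :=
  ∀ i j, MemLp (fun z => X z i j) 2 μ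

/-- Membership in the matrix Hardy space `H²(𝔻)` (boundary-value formulation). -/
def InH2 {ι κ : Type*} [Fintype ι] [Fintype κ] (X : Circle → Matrix ι κ ℂ) : Prop :=
  MemL2 X ∧ ∀ k : ℤ, k < 0 → mFourierCoeff X k = 0

/-- Membership in `H²(𝔻*)` (boundary-value formulation). -/
def InH2star {ι κ : Type*} [Fintype ι] [Fintype κ] (X : Circle → Matrix ι κ ℂ) : Prop :=
  MemL2 X ∧ ∀ k : ℤ, 0 < k → mFourierCoeff X k = 0

/-- The outerness condition `log |det X̂(0)| = ∫_𝕋 log |det X|`. -/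
def IsOuter {ι : Type*} [Fintype ι] [DecidableEq ι] (X : Circle → Matrix ι ι ℂ) : Prop :=
  Real.log ‖(mFourierCoeff X 0).det‖ =
    ∫ z : Circle, Real.log ‖(X z).det‖ ∂μ

/-- Pointwise conjugate transpose of a matrix-valued function. -/
def cT {ι κ : Type*} (X : Circle → Matrix ι κ ℂ) : Circle → Matrix κ ι ℂ :=
  fun z => (X z)ᴴ

/-- Entrywise a.e. measurability. -/
def AEMeas {ι κ : Type*} (X : Circle → Matrix ι κ ℂ) : Prop :=
  ∀ i j, AEMeasurable (fun z => X z i j) μ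

/-- A measurable matrix function `B : 𝕋 → 𝓒` is Szegő if `∫_𝕋 log det (Id - BB*) > -∞`,
i.e. the (a.e. nonpositive) function `log det (Id - BB*)` is integrable. -/
def Szego {n : ℕ} (B : Circle → Mat n) : Prop :=
  AEMeas B ∧ (∀ᵐ z ∂μ, Contractive (B z)) ∧
    Integrable (fun z => Real.log ‖(1 - B z * (B z)ᴴ).det‖) μ

/-- Upper left `n × n` block of a `2n × 2n` matrix-valued function. -/
def blockA {n : ℕ} (M : Circle → Mat2 n) : Circle → Mat n := fun z => (M z).toBlocks₁₁

/-- Upper right block. -/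
def blockB {n : ℕ} (M : Circle → Mat2 n) : Circle → Mat n := fun z => (M z).toBlocks₁₂

/-- Lower left block. -/
def blockC {n : ℕ} (M : Circle → Mat2 n) : Circle → Mat n := fun z => (M z).toBlocks₂₁

/-- Lower right block. -/
def blockD {n : ℕ} (M : Circle → Mat2 n) : Circle → Mat n := fun z => (M z).toBlocks₂₂

/-- Membership in `𝐁_α`. -/
def MemB {n : ℕ} (α : Fin 2 → Fin 2) (M : Circle → Mat2 n) : Prop :=
  (∀ i j, AEMeasurable (fun z => M z i j) μ) ∧
  (∀ᵐ z ∂μ, IsSU (M z)) ∧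
  Szego (blockB M) ∧ Szego (blockC M) ∧
  InH2 (cT (blockA M)) ∧ IsOuter (cT (blockA M)) ∧
  InH2 (blockD M) ∧ IsOuter (blockD M) ∧
  Triangular (α 0) (mFourierCoeff (blockA M) 0) ∧
  Triangular (α 1) (mFourierCoeff (blockD M) 0)

open Classical in
/-- `Y_α(F)`: the unique element of `SU_α(2n)` with upper right block `F`. -/
def Yc {n : ℕ} (α : Fin 2 → Fin 2) (F : Mat n) : Mat2 n :=
  if h : ∃ M : Mat2 n, IsSUa α M ∧ M.toBlocks₁₂ = F then h.choose else 1

/-- The conjugation `Ad(w)` acting on `2n × 2n` block matrices. -/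
def Ad {n : ℕ} (w : ℂ) (M : Mat2 n) : Mat2 n :=
  Matrix.fromBlocks M.toBlocks₁₁ (w • M.toBlocks₁₂) (w⁻¹ • M.toBlocks₂₁) M.toBlocks₂₂

/-- The ordered product `∏_{j=c}^{d} Ad(z^j) Y_α(F_j)`. -/
def nlftOn {n : ℕ} (α : Fin 2 → Fin 2) (F : ℤ → Mat n) (c d : ℤ) (z : Circle) : Mat2 n :=
  (((Finset.Icc c d).sort (· ≤ ·)).map fun j => Ad ((z : ℂ) ^ j) (Yc α (F j))).prod

open Classical in
/-- A bound for the support of a finitely supported sequence. -/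
def suppBound {n : ℕ} (F : ℤ → Mat n) : ℕ :=
  if h : (Function.support F).Finite then h.toFinset.sup fun j => j.natAbs else 0

/-- The nonlinear Fourier transform `𝓕_α(F)` of a finitely supported sequence of
contractive matrices. -/
def nlft {n : ℕ} (α : Fin 2 → Fin 2) (F : ℤ → Mat n) (z : Circle) : Mat2 n :=
  nlftOn α F (-(suppBound F : ℤ)) (suppBound F : ℤ) z

/-- The metric `d` on matrix functions on the circle. -/
def metricD {n : ℕ} (M M' : Circle → Mat2 n) : ℝ :=
  Real.sqrt (∫ z : Circle, hsNorm (M z - M' z) ^ 2 ∂μ) +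
  |Real.log ‖(mFourierCoeff (blockA M) 0).det‖ -
    Real.log ‖(mFourierCoeff (blockA M') 0).det‖|

/-- Membership in the space `𝐋_α`. -/
def MemL {n : ℕ} (α : Fin 2 → Fin 2) (M : Circle → Mat2 n) : Prop :=
  (∀ᵐ z ∂μ, IsSU (M z)) ∧
  MemL2 (blockA M) ∧ MemL2 (blockB M) ∧ MemL2 (blockC M) ∧ MemL2 (blockD M) ∧
  (∀ k : ℤ, 0 < k → mFourierCoeff (blockA M) k = 0) ∧
  (∀ k : ℤ, k < 0 → mFourierCoeff (blockD M) k = 0) ∧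
  Triangular (α 0) (mFourierCoeff (blockA M) 0) ∧
  Triangular (α 1) (mFourierCoeff (blockD M) 0)

/-- Properties (i) and (ii) in the definition of `𝐇_α⁺`. -/
def Hp12 {n : ℕ} (α : Fin 2 → Fin 2) (M : Circle → Mat2 n) : Prop :=
  InH2 (cT (blockA M)) ∧ InH2 (cT (blockC M)) ∧ InH2 (blockB M) ∧ InH2 (blockD M) ∧
  Triangular (α 0) (mFourierCoeff (blockA M) 0) ∧
  Triangular (α 1) (mFourierCoeff (blockD M) 0)

/-- Membership in the space `𝐇_α⁺`. -/
def MemHplus {n : ℕ} (α : Fin 2 → Fin 2) (M : Circle → Mat2 n) : Prop :=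
  (∀ᵐ z ∂μ, IsSU (M z)) ∧ Hp12 α M ∧
  ∀ (M' : Circle → Mat2 n) (I₁ I₂ : Circle → Mat n),
    (∀ᵐ z ∂μ, IsSU (M' z)) → Hp12 α M' →
    (∀ᵐ z ∂μ, IsUnitary (I₁ z)) → (∀ᵐ z ∂μ, IsUnitary (I₂ z)) →
    InH2 (cT I₁) → InH2 I₂ →
    (∀ᵐ z ∂μ, M z = M' z * Matrix.fromBlocks (I₁ z) 0 0 (I₂ z)) →
    (∀ᵐ z ∂μ, I₁ z = 1) ∧ (∀ᵐ z ∂μ, I₂ z = 1)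

/-- Membership in the space `𝐔_α⁺`: as `𝐇_α⁺` but with `U(2n)` in place of `SU(2n)`. -/
def MemUplus {n : ℕ} (α : Fin 2 → Fin 2) (M : Circle → Mat2 n) : Prop :=
  (∀ᵐ z ∂μ, IsUnitary (M z)) ∧ Hp12 α M ∧
  ∀ (M' : Circle → Mat2 n) (I₁ I₂ : Circle → Mat n),
    (∀ᵐ z ∂μ, IsUnitary (M' z)) → Hp12 α M' →
    (∀ᵐ z ∂μ, IsUnitary (I₁ z)) → (∀ᵐ z ∂μ, IsUnitary (I₂ z)) →
    InH2 (cT I₁) → InH2 I₂ →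
    (∀ᵐ z ∂μ, M z = M' z * Matrix.fromBlocks (I₁ z) 0 0 (I₂ z)) →
    (∀ᵐ z ∂μ, I₁ z = 1) ∧ (∀ᵐ z ∂μ, I₂ z = 1)

/-- Properties (i) and (ii) in the definition of `𝐇⁻_{α,0}`. -/
def Hm12 {n : ℕ} (α : Fin 2 → Fin 2) (M : Circle → Mat2 n) : Prop :=
  InH2 (cT (blockA M)) ∧ InH2 (blockD M) ∧
  MemL2 (blockB M) ∧ (∀ k : ℤ, 0 ≤ k → mFourierCoeff (blockB M) k = 0) ∧
  MemL2 (blockC M) ∧ (∀ k : ℤ, k ≤ 0 → mFourierCoeff (blockC M) k = 0) ∧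
  Triangular (α 0) (mFourierCoeff (blockA M) 0) ∧
  Triangular (α 1) (mFourierCoeff (blockD M) 0)

/-- Membership in the space `𝐇⁻_{α,0}`. -/
def MemHminus {n : ℕ} (α : Fin 2 → Fin 2) (M : Circle → Mat2 n) : Prop :=
  (∀ᵐ z ∂μ, IsSU (M z)) ∧ Hm12 α M ∧
  ∀ (M' : Circle → Mat2 n) (I₁ I₂ : Circle → Mat n),
    (∀ᵐ z ∂μ, IsSU (M' z)) → Hm12 α M' →
    (∀ᵐ z ∂μ, IsUnitary (I₁ z)) → (∀ᵐ z ∂μ, IsUnitary (I₂ z)) →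
    InH2 (cT I₁) → InH2 I₂ →
    (∀ᵐ z ∂μ, M z = Matrix.fromBlocks (I₁ z) 0 0 (I₂ z) * M' z) →
    (∀ᵐ z ∂μ, I₁ z = 1) ∧ (∀ᵐ z ∂μ, I₂ z = 1)

/-- Membership in `ℓ²(ℤ_{≥0}; 𝓒)`. -/
def L2Half {n : ℕ} (F : ℕ → Mat n) : Prop :=
  (∀ j, Contractive (F j)) ∧ Summable fun j => hsNorm (F j) ^ 2

/-- Membership in `ℓ²(ℤ; 𝓒)`. -/
def L2Z {n : ℕ} (F : ℤ → Mat n) : Prop :=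
  (∀ j, Contractive (F j)) ∧ Summable fun j => hsNorm (F j) ^ 2

/-- The `ℓ²` distance between two sequences. -/
def distL2Half {n : ℕ} (F F' : ℕ → Mat n) : ℝ :=
  Real.sqrt (∑' j, hsNorm (F j - F' j) ^ 2)

/-- Extension of a one-sided sequence to `ℤ` by zero. -/
def extZ {n : ℕ} (F : ℕ → Mat n) : ℤ → Mat n :=
  fun j => if 0 ≤ j then F j.toNat else 0

/-- `Φ` is a continuous extension of the NLFT `𝓕_α` to `ℓ²(ℤ_{≥0}; 𝓒)`, mapping into
`(𝐋_α, d)`. -/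
def IsNLFTExtension {n : ℕ} (α : Fin 2 → Fin 2) (Φ : (ℕ → Mat n) → Circle → Mat2 n) : Prop :=
  (∀ F : ℕ → Mat n, (∀ j, Contractive (F j)) → (Function.support F).Finite →
      ∀ᵐ z ∂μ, Φ F z = nlft α (extZ F) z) ∧
  (∀ F, L2Half F → MemL α (Φ F)) ∧
  (∀ F, L2Half F → ∀ ε : ℝ, 0 < ε → ∃ δ : ℝ, 0 < δ ∧ ∀ F', L2Half F' →
      distL2Half F F' < δ → metricD (Φ F) (Φ F') < ε)

/-- The truncation of a two-sided sequence to `[-N, N]`. -/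
def truncZ {n : ℕ} (F : ℤ → Mat n) (N : ℕ) : ℤ → Mat n :=
  fun j => if j.natAbs ≤ N then F j else 0

/-- `𝓕_α(F) = M` for a two-sided square-summable sequence `F`, formulated as convergence
in the metric `d` of the NLFTs of the truncations of `F`. -/
def NLFTeq {n : ℕ} (α : Fin 2 → Fin 2) (F : ℤ → Mat n) (M : Circle → Mat2 n) : Prop :=
  Tendsto (fun N : ℕ => metricD (nlft α (truncZ F N)) M) atTop (nhds 0)

end NLFT

/-!
Multiplying `M = [[A, B], [C, D]]` on the right by `[[A*, 0], [B*, 1]]` gives `[[1, B], [0, D]]`,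
because the rows of a unitary matrix are orthonormal; taking determinants,
`det M · conj (det A) = det D`. Conjugating this identity and using `|det M| = 1` gives
`det M · conj (det D) = det A`.
-/

namespace Matrix

variable {m n R : Type*} [Fintype m] [Fintype n] [DecidableEq m] [DecidableEq n]
  [CommRing R] [StarRing R] {M : Matrix (m ⊕ n) (m ⊕ n) R}

theorem det_mul_star_det_toBlocks₁₁ (hM : M ∈ unitaryGroup (m ⊕ n) R) :
    M.det * star M.toBlocks₁₁.det = M.toBlocks₂₂.det := by
  obtain ⟨A, B, C, D, rfl⟩ : ∃ A B C D, M = fromBlocks A B C D :=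
    ⟨_, _, _, _, (fromBlocks_toBlocks M).symm⟩
  have hrows := mem_unitaryGroup_iff.1 hM
  rw [star_eq_conjTranspose, fromBlocks_conjTranspose, fromBlocks_multiply, ← fromBlocks_one,
    fromBlocks_inj] at hrows
  obtain ⟨h₁₁, -, h₂₁, -⟩ := hrows
  have hprod : fromBlocks A B C D * fromBlocks Aᴴ 0 Bᴴ 1 = fromBlocks 1 B 0 D := by
    rw [fromBlocks_multiply, h₁₁, h₂₁]
    simp
  simpa [det_conjTranspose, det_fromBlocks_zero₁₂, det_fromBlocks_zero₂₁] using
    congrArg det hprod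

theorem det_mul_star_det_toBlocks₂₂ (hM : M ∈ unitaryGroup (m ⊕ n) R) :
    M.det * star M.toBlocks₂₂.det = M.toBlocks₁₁.det := by
  rw [← det_mul_star_det_toBlocks₁₁ hM, star_mul', star_star, ← mul_assoc,
    Unitary.mul_star_self_of_mem (det_of_mem_unitary hM), one_mul]

end Matrix

namespace NLFT

open Matrix in
theorem statement_3_general (n : ℕ) (M : Mat2 n) (hU : IsUnitary M) (hA : IsUnit M.toBlocks₁₁) :
    M.det = M.toBlocks₂₂.det / ((M.toBlocks₁₁)ᴴ).det ∧
    M.det = M.toBlocks₁₁.det / ((M.toBlocks₂₂)ᴴ).det := by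
  have hM : M ∈ unitaryGroup _ ℂ := mem_unitaryGroup_iff'.2 hU
  have hAD := det_mul_star_det_toBlocks₁₁ hM
  have hdetA : star M.toBlocks₁₁.det ≠ 0 := star_ne_zero.2 (hA.map detMonoidHom).ne_zero
  have hdetD : star M.toBlocks₂₂.det ≠ 0 := by
    rw [star_ne_zero, ← hAD]
    exact mul_ne_zero (UnitaryGroup.det_isUnit ⟨M, hM⟩).ne_zero hdetA
  rw [det_conjTranspose, det_conjTranspose]
  exact ⟨(eq_div_iff hdetA).2 hAD, (eq_div_iff hdetD).2 (det_mul_star_det_toBlocks₂₂ hM)⟩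

/-- Determinant of a `2 × 2`-block unitary matrix with invertible diagonal blocks. -/
theorem statement_3 (n : ℕ) (hn : 1 ≤ n) (M : Mat2 n) (hU : IsUnitary M)
    (hA : IsUnit M.toBlocks₁₁) (hD : IsUnit M.toBlocks₂₂) :
    M.det = M.toBlocks₂₂.det / ((M.toBlocks₁₁)ᴴ).det ∧
    M.det = M.toBlocks₁₁.det / ((M.toBlocks₂₂)ᴴ).det :=
  statement_3_general n M hU hA

end NLFT
end
end

section
/- Let I : 𝕋 → 𝓜 be measurable with I(z) unitary for a.e. z ∈ 𝕋 and with I ∈ H²(𝔻) (all Fourier coefficients of negative index vanish). If the scalar function z ↦ det I(z) is a.e. equal to a constant on 𝕋, then I is a.e. equal to a constant unitary matrix on 𝕋. (This is the boundary-value formulation of the statement that an inner matrix-valued function with constant determinant is constant.) -/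
open MeasureTheory Matrix Filter
open scoped Real ENNReal Topology ComplexOrder

noncomputable section

open ComplexConjugate

theorem Subalgebra.adjugate_apply_mem {R X ι : Type*} [CommRing R] [Fintype ι] [DecidableEq ι]
    (S : Subalgebra R (X → R)) {F : X → Matrix ι ι R} (hF : ∀ i j, (fun x => F x i j) ∈ S)
    (i j : ι) : (fun x => (F x).adjugate i j) ∈ S := by
  let A : Matrix ι ι S := Matrix.of fun i j => ⟨fun x => F x i j, hF i j⟩
  suffices h : (fun x => (F x).adjugate i j) = (A.adjugate i j : X → R) from h ▸ (A.adjugate i j).2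
  funext x
  exact (congrFun₂ (RingHom.map_adjugate ((Pi.evalRingHom _ x).comp S.val.toRingHom) A) i j).symm

theorem Matrix.star_eq_inv_det_smul_adjugate {ι 𝕜 : Type*} [Fintype ι] [DecidableEq ι] [Field 𝕜]
    [StarRing 𝕜] {U : Matrix ι ι 𝕜} (hU : U ∈ unitaryGroup ι 𝕜) :
    star U = U.det⁻¹ • U.adjugate := by
  rw [← Ring.inverse_eq_inv', ← inv_def, inv_eq_left_inv (mem_unitaryGroup_iff'.mp hU)]

namespace AddCircle

variable {T : ℝ} [Fact (0 < T)]

theorem hasSum_prod_fourierCoeff (f g : Lp ℂ 2 (haarAddCircle (T := T))) :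
    HasSum (fun i => conj (fourierCoeff f i) * fourierCoeff g i)
      (∫ t, conj (f t) * g t ∂haarAddCircle) := by
  simp_rw [mul_comm (conj _)]
  refine (fourierBasis.hasSum_inner_mul_inner f g).congr_fun fun n ↦ ?_
  simp only [← fourierBasis_repr, HilbertBasis.repr_apply_apply, inner_conj_symm,
      mul_comm (inner ℂ f _)]

theorem fourierCoeff_conj (f : AddCircle T → ℂ) (k : ℤ) :
    fourierCoeff (fun t => conj (f t)) k = conj (fourierCoeff f (-k)) := by
  simp only [fourierCoeff, smul_eq_mul, ← integral_conj, map_mul, neg_neg, ← fourier_neg]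

theorem hasSum_fourierCoeff_mul {f g : AddCircle T → ℂ} (hf : MemLp f 2 haarAddCircle)
    (hg : MemLp g 2 haarAddCircle) (k : ℤ) :
    HasSum (fun i => fourierCoeff f (k - i) * fourierCoeff g i)
      (fourierCoeff (fun t => f t * g t) k) := by
  have hu : MemLp (fun t => fourier k t * conj (f t)) 2 haarAddCircle :=
    hf.star.mul' (p := ∞) (memLp_top_of_bound (fourier k).continuous.aestronglyMeasurable 1
      (Eventually.of_forall fun t => (Circle.norm_coe _).le))
  have hcoeff (i : ℤ) : conj (fourierCoeff (hu.toLp _) i) = fourierCoeff f (k - i) := by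
    rw [fourierCoeff_congr_ae hu.coeFn_toLp]
    simp only [fourierCoeff, ← integral_conj]
    refine integral_congr_ae (Eventually.of_forall fun t => ?_)
    have hki : -(k - i) = i + -k := by ring
    simp only [smul_eq_mul, map_mul, RCLike.conj_conj, fourier_neg, hki, fourier_add]
    ring
  have hint : ∫ t, conj (hu.toLp _ t) * hg.toLp _ t ∂haarAddCircle =
      fourierCoeff (fun t => f t * g t) k := by
    refine integral_congr_ae ?_
    filter_upwards [hu.coeFn_toLp, hg.coeFn_toLp] with t hut hgt
    simp only [hut, hgt, smul_eq_mul, map_mul, RCLike.conj_conj, fourier_neg]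
    ring
  simpa only [hcoeff, fourierCoeff_congr_ae hg.coeFn_toLp, hint] using
    hasSum_prod_fourierCoeff (hu.toLp _) (hg.toLp _)

theorem fourierCoeff_const (c : ℂ) : fourierCoeff (fun _ : AddCircle T => c) = Pi.single 0 c := by
  have hc : (fun _ : AddCircle T => c) = c • ⇑(fourier (T := T) 0) := by
    ext t
    simp
  ext k
  rw [hc, fourierCoeff.const_smul, fourierCoeff_fourier]
  simp [Pi.single_apply]

theorem ae_eq_const_of_fourierCoeff_eq_zero {f : AddCircle T → ℂ} (hf : MemLp f 2 haarAddCircle)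
    (h : ∀ k ≠ 0, fourierCoeff f k = 0) : f =ᵐ[haarAddCircle] fun _ => fourierCoeff f 0 := by
  have hsum := hasSum_fourier_series_L2 (hf.toLp f)
  simp only [fourierCoeff_congr_ae hf.coeFn_toLp] at hsum
  have hLp : hf.toLp f = fourierCoeff f 0 • fourierLp 2 0 :=
    hsum.unique (hasSum_single 0 fun k hk => by rw [h k hk, zero_smul])
  calc f =ᵐ[haarAddCircle] hf.toLp f := hf.coeFn_toLp.symm
    _ = ⇑(fourierCoeff f 0 • fourierLp (T := T) 2 0) := by rw [hLp]
    _ =ᵐ[haarAddCircle] fourierCoeff f 0 • ⇑(fourierLp (T := T) 2 0) := Lp.coeFn_smul _ _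
    _ =ᵐ[haarAddCircle] fun _ => fourierCoeff f 0 := by
      filter_upwards [coeFn_fourierLp (T := T) 2 0] with t ht
      rw [Pi.smul_apply, ht, fourier_zero, smul_eq_mul, mul_one]

variable (T) in
def hardyInfty : Subalgebra ℂ (AddCircle T → ℂ) where
  carrier := {f | MemLp f ∞ haarAddCircle ∧ ∀ k < 0, fourierCoeff f k = 0}
  mul_mem' {f g} hf hg := by
    refine ⟨hg.1.mul' (p := ∞) hf.1, fun k hk => ?_⟩
    have hterm (i : ℤ) : fourierCoeff f (k - i) * fourierCoeff g i = 0 := by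
      rcases lt_or_ge i 0 with hi | hi
      · rw [hg.2 i hi, mul_zero]
      · rw [hf.2 (k - i) (by omega), zero_mul]
    have hsum := hasSum_fourierCoeff_mul (hf.1.mono_exponent le_top) (hg.1.mono_exponent le_top) k
    exact hsum.unique (by simpa only [hterm] using hasSum_zero)
  add_mem' {f g} hf hg := by
    refine ⟨hf.1.add hg.1, fun k hk => ?_⟩
    rw [fourierCoeff.add (hf.1.integrable le_top) (hg.1.integrable le_top), Pi.add_apply,
      hf.2 k hk, hg.2 k hk, add_zero]
  algebraMap_mem' c := ⟨memLp_const c, fun k hk => by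
    change fourierCoeff (fun _ => c) k = 0
    rw [fourierCoeff_const, Pi.single_eq_of_ne hk.ne]⟩

theorem fourierCoeff_eq_zero_of_conj_mem_hardyInfty {f : AddCircle T → ℂ}
    (hf : (fun t => conj (f t)) ∈ hardyInfty T) {k : ℤ} (hk : 0 < k) : fourierCoeff f k = 0 := by
  simpa [fourierCoeff_conj] using congrArg conj (hf.2 (-k) (by omega))

theorem exists_unitary_ae_eq_of_det_ae_eq_const {ι : Type*} [Fintype ι] [DecidableEq ι]
    {F : AddCircle T → Matrix ι ι ℂ}
    (hmeas : ∀ i j, AEStronglyMeasurable (fun t => F t i j) haarAddCircle)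
    (hneg : ∀ i j, ∀ k < 0, fourierCoeff (fun t => F t i j) k = 0)
    (hu : ∀ᵐ t ∂haarAddCircle, F t ∈ unitaryGroup ι ℂ) {c : ℂ}
    (hdet : ∀ᵐ t ∂haarAddCircle, (F t).det = c) :
    ∃ U ∈ unitaryGroup ι ℂ, ∀ᵐ t ∂haarAddCircle, F t = U := by
  have hentry (i j : ι) : (fun t => F t i j) ∈ hardyInfty T :=
    ⟨memLp_top_of_bound (hmeas i j) 1 (hu.mono fun t ht => entry_norm_bound_of_unitary ht i j),
      hneg i j⟩
  have hconj (i j : ι) : (fun t => conj (F t i j)) ∈ hardyInfty T := by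
    have hadj := (hardyInfty T).smul_mem (Subalgebra.adjugate_apply_mem _ hentry j i) c⁻¹
    have hae : (c⁻¹ • fun t => (F t).adjugate j i) =ᵐ[haarAddCircle] fun t => conj (F t i j) := by
      filter_upwards [hu, hdet] with t ht htc
      simpa [htc] using (congrFun₂ (star_eq_inv_det_smul_adjugate ht) j i).symm
    exact ⟨hadj.1.ae_eq hae, fun k hk => fourierCoeff_congr_ae hae.symm ▸ hadj.2 k hk⟩
  have hconst (i j : ι) :
      (fun t => F t i j) =ᵐ[haarAddCircle] fun _ => fourierCoeff (fun t => F t i j) 0 := by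
    refine ae_eq_const_of_fourierCoeff_eq_zero ((hentry i j).1.mono_exponent le_top) fun k hk => ?_
    rcases hk.lt_or_gt with hk | hk
    · exact hneg i j k hk
    · exact fourierCoeff_eq_zero_of_conj_mem_hardyInfty (hconj i j) hk
  set U : Matrix ι ι ℂ := Matrix.of fun i j => fourierCoeff (fun t => F t i j) 0
  have hU : ∀ᵐ t ∂haarAddCircle, F t = U := by
    filter_upwards [ae_all_iff.2 fun i => ae_all_iff.2 (hconst i)] with t ht
    exact Matrix.ext ht
  obtain ⟨t, htu, htU⟩ := (hu.and hU).exists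
  exact ⟨U, htU ▸ htu, hU⟩

end AddCircle

namespace NLFT

open AddCircle

instance : Fact (0 < 2 * π) := ⟨Real.two_pi_pos⟩

theorem isUnitary_iff_mem_unitaryGroup {ι : Type*} [Fintype ι] [DecidableEq ι]
    {M : Matrix ι ι ℂ} : IsUnitary M ↔ M ∈ unitaryGroup ι ℂ := by
  rw [mem_unitaryGroup_iff', star_eq_conjTranspose, IsUnitary]

def circleEquiv : AddCircle (2 * π) ≃ᵐ Circle :=
  (homeomorphCircle Real.two_pi_pos.ne').toMeasurableEquiv

theorem coe_circleEquiv : ⇑circleEquiv = toCircle :=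
  funext (homeomorphCircle_apply _)

theorem measurePreserving_circleEquiv : MeasurePreserving circleEquiv haarAddCircle μ :=
  ⟨circleEquiv.measurable, by rw [coe_circleEquiv]; rfl⟩

theorem ae_iff_ae_circleEquiv {P : Circle → Prop} :
    (∀ᵐ z ∂μ, P z) ↔ ∀ᵐ t ∂haarAddCircle, P (circleEquiv t) := by
  rw [← measurePreserving_circleEquiv.map_eq]
  exact circleEquiv.measurableEmbedding.ae_map_iff

theorem mFourierCoeff_apply {ι κ : Type*} [Fintype ι] [Fintype κ] (X : Circle → Matrix ι κ ℂ)
    (k : ℤ) (i : ι) (j : κ) :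
    mFourierCoeff X k i j = fourierCoeff (fun t => X (circleEquiv t) i j) k := by
  rw [mFourierCoeff, of_apply, ← measurePreserving_circleEquiv.integral_comp']
  simp only [fourierCoeff, smul_eq_mul, fourier_apply, toCircle_zsmul, Circle.coe_zpow,
    coe_circleEquiv]

theorem statement_4_general (n : ℕ) (I : Circle → Mat n)
    (h2 : InH2 I) (hu : ∀ᵐ z ∂μ, IsUnitary (I z))
    (c : ℂ) (hc : ∀ᵐ z ∂μ, (I z).det = c) :
    ∃ U : Mat n, IsUnitary U ∧ ∀ᵐ z ∂μ, I z = U := by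
  have hmeas (i j : Fin n) :
      AEStronglyMeasurable (fun t => I (circleEquiv t) i j) haarAddCircle :=
    (h2.1 i j).aestronglyMeasurable.comp_measurePreserving measurePreserving_circleEquiv
  have hneg (i j : Fin n) (k : ℤ) (hk : k < 0) :
      fourierCoeff (fun t => I (circleEquiv t) i j) k = 0 := by
    rw [← mFourierCoeff_apply, h2.2 k hk, Matrix.zero_apply]
  have hu' : ∀ᵐ t ∂haarAddCircle, I (circleEquiv t) ∈ unitaryGroup (Fin n) ℂ :=
    (ae_iff_ae_circleEquiv (P := fun z => I z ∈ unitaryGroup (Fin n) ℂ)).1 <|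
      hu.mono fun _ => isUnitary_iff_mem_unitaryGroup.1
  obtain ⟨U, hU, hIU⟩ := exists_unitary_ae_eq_of_det_ae_eq_const hmeas hneg hu'
    ((ae_iff_ae_circleEquiv (P := fun z => (I z).det = c)).1 hc)
  exact ⟨U, isUnitary_iff_mem_unitaryGroup.2 hU,
    (ae_iff_ae_circleEquiv (P := fun z => I z = U)).2 hIU⟩

/-- An inner matrix function (boundary-value formulation) with a.e. constant determinant
is a.e. equal to a constant unitary matrix. -/
theorem statement_4 (n : ℕ) (hn : 1 ≤ n) (I : Circle → Mat n)
    (h2 : InH2 I) (hu : ∀ᵐ z ∂μ, IsUnitary (I z))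
    (c : ℂ) (hc : ∀ᵐ z ∂μ, (I z).det = c) :
    ∃ U : Mat n, IsUnitary U ∧ ∀ᵐ z ∂μ, I z = U :=
  statement_4_general n I h2 hu c hc

end NLFT
end
end

section
/- Let a ∈ {0,1}. For every positive definite Hermitian matrix P ∈ 𝓜 there exists a unique U ∈ 𝓖_a with P = U*·U (the Cholesky factorization). Moreover, for every ε > 0 there exists a constant C depending only on ε and n such that ‖U − U'‖_∞ ≤ C·‖P − P'‖_∞ whenever P, P' ∈ 𝓜 are positive definite Hermitian with all eigenvalues in the interval [ε, ε^{−1}] and U, U' ∈ 𝓖_a are their respective Cholesky factors. -/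
open MeasureTheory Matrix Filter
open scoped Real ENNReal Topology ComplexOrder

noncomputable section

/-!
Existence: writing `P = Bᴴ B`, Gram–Schmidt expresses the columns of `B` in an orthonormal basis
through an upper triangular matrix `R`, so `P = Rᴴ R`; multiplying the rows of `R` by unimodular
scalars makes its diagonal positive. Uniqueness and stability: for two factors put
`X = U' U⁻¹`, triangular with positive diagonal. Then `U'⁻ᴴ (P' - P) U⁻¹ = X - X⁻ᴴ`, and since
`X⁻ᴴ` is triangular the other way round, every entry of `X - 1` is bounded by the corresponding
entry of `X - X⁻ᴴ` (on the diagonal this is `|x - 1| ≤ |x - x⁻¹|` for `x > 0`). Finally the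
eigenvalue bounds give `‖U‖, ‖U⁻¹‖, ‖U'⁻¹‖ ≤ ε^(-1/2)`.
-/

section CStarAlgebra

variable {A : Type*} [CStarAlgebra A] [PartialOrder A] [StarOrderedRing A]

theorem norm_le_sqrt_of_star_mul_self_le {a : A} {r : ℝ} (hr : 0 ≤ r)
    (h : star a * a ≤ algebraMap ℝ A r) : ‖a‖ ≤ √r := by
  rw [Real.le_sqrt (norm_nonneg a) hr, sq, ← CStarRing.norm_star_mul_self]
  exact (CStarAlgebra.norm_le_iff_le_algebraMap _ hr (star_mul_self_nonneg a)).mpr h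

theorem norm_inv_le_sqrt_of_algebraMap_le_star_mul_self {u : Aˣ} {r : ℝ} (hr : 0 < r)
    (h : algebraMap ℝ A r ≤ star ↑u * ↑u) : ‖(↑u⁻¹ : A)‖ ≤ √r⁻¹ := by
  let c : Aˣ := Units.map (algebraMap ℝ A : ℝ →* A) (Units.mk0 r⁻¹ (inv_ne_zero hr.ne'))
  have hc : (c : A) = algebraMap ℝ A r⁻¹ := rfl
  have hc_inv : (↑c⁻¹ : A) = algebraMap ℝ A r := by simp [c]
  have hu : (↑(star u * u) : A) = star ↑u * ↑u := by simp
  have hinv : (↑(star u * u)⁻¹ : A) ≤ algebraMap ℝ A r⁻¹ := by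
    rw [← hc, CStarAlgebra.inv_le_iff, hc_inv, hu]
    · exact h
    · rw [hu]
      exact star_mul_self_nonneg _
    · rw [hc]
      exact (isStrictlyPositive_algebraMap (inv_pos.mpr hr)).nonneg
  rw [← norm_star]
  refine norm_le_sqrt_of_star_mul_self_le (inv_nonneg.mpr hr.le) ?_
  convert hinv using 1
  simp [_root_.mul_inv_rev]

end CStarAlgebra

theorem RCLike.norm_sub_one_le_norm_sub_inv {𝕜 : Type*} [RCLike 𝕜] {x : 𝕜} (hx : 0 < x) :
    ‖x - 1‖ ≤ ‖x - x⁻¹‖ := by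
  obtain ⟨r, hr, rfl⟩ := RCLike.pos_iff_exists_ofReal.mp hx
  have key : (r : 𝕜) - (r : 𝕜)⁻¹ = (r - 1 : 𝕜) * ((1 + r⁻¹ : ℝ) : 𝕜) := by
    push_cast
    field_simp
    ring
  rw [key, norm_mul, RCLike.norm_ofReal, abs_of_pos (by positivity)]
  exact le_mul_of_one_le_right (norm_nonneg _) (le_add_of_nonneg_right (by positivity))

namespace Matrix

section L2OpNorm

open scoped Norms.L2Operator

variable {𝕜 : Type*} [RCLike 𝕜] {m n : Type*} [Fintype m] [Fintype n]

theorem norm_apply_le_l2_opNorm [DecidableEq n] (A : Matrix m n 𝕜) (i : m) (j : n) :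
    ‖A i j‖ ≤ ‖A‖ := by
  have h := A.l2_opNorm_mulVec (EuclideanSpace.single j 1)
  have hi := PiLp.norm_apply_le ((EuclideanSpace.equiv m 𝕜).symm (A *ᵥ Pi.single j 1)) i
  simp only [PiLp.norm_single, norm_one, mul_one] at h
  simpa using hi.trans h

theorem l2_opNorm_single_le [DecidableEq m] [DecidableEq n] (i : m) (j : n) (c : 𝕜) :
    ‖(single i j c : Matrix m n 𝕜)‖ ≤ ‖c‖ := by
  refine ContinuousLinearMap.opNorm_le_bound _ (norm_nonneg c) fun x => ?_
  simp only [LinearEquiv.trans_apply, LinearMap.coe_toContinuousLinearMap', toLpLin_apply,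
    single_mulVec]
  rw [← Pi.single, PiLp.toLp_single, PiLp.norm_single, norm_mul]
  gcongr
  exact PiLp.norm_apply_le x j

theorem l2_opNorm_le_sum_norm_apply [DecidableEq m] [DecidableEq n] (A : Matrix m n 𝕜) :
    ‖A‖ ≤ ∑ i, ∑ j, ‖A i j‖ := by
  conv_lhs => rw [A.matrix_eq_sum_single]
  refine (norm_sum_le _ _).trans (Finset.sum_le_sum fun i _ => ?_)
  exact (norm_sum_le _ _).trans (Finset.sum_le_sum fun j _ => l2_opNorm_single_le i j _)

theorem l2_opNorm_le_of_norm_apply_le [DecidableEq m] [DecidableEq n] {A B : Matrix m n 𝕜}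
    (h : ∀ i j, ‖A i j‖ ≤ ‖B i j‖) : ‖A‖ ≤ Fintype.card m * Fintype.card n * ‖B‖ := by
  calc ‖A‖ ≤ ∑ i, ∑ j, ‖A i j‖ := l2_opNorm_le_sum_norm_apply A
    _ ≤ ∑ _i : m, ∑ _j : n, ‖B‖ := by
      gcongr with i _ j _
      exact (h i j).trans (norm_apply_le_l2_opNorm B i j)
    _ = Fintype.card m * Fintype.card n * ‖B‖ := by simp [mul_assoc]

end L2OpNorm

section Triangular

variable {n α : Type*} [Fintype n] [LinearOrder α] {b : n → α}

theorem BlockTriangular.mul_apply_self {R : Type*} [NonUnitalNonAssocSemiring R]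
    {M N : Matrix n n R} (hb : Function.Injective b) (hM : M.BlockTriangular b)
    (hN : N.BlockTriangular b) (i : n) : (M * N) i i = M i i * N i i := by
  rw [mul_apply]
  refine Finset.sum_eq_single_of_mem i (Finset.mem_univ i) fun k _ hk => ?_
  rcases (hb.ne hk).lt_or_gt with h | h
  · rw [hM h, zero_mul]
  · rw [hN h, mul_zero]

variable [DecidableEq n]

theorem BlockTriangular.inv_apply_self {K : Type*} [Field K] {M : Matrix n n K}
    (hb : Function.Injective b) (hM : M.BlockTriangular b) (hdet : IsUnit M.det) (i : n) :
    M⁻¹ i i = (M i i)⁻¹ := by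
  have : Invertible M := M.invertibleOfIsUnitDet hdet
  refine eq_inv_of_mul_eq_one_left ?_
  rw [← (blockTriangular_inv_of_blockTriangular hM).mul_apply_self hb hM, nonsing_inv_mul M hdet,
    one_apply_eq]

theorem conjTranspose_inv_mul_sub_mul_inv {R : Type*} [CommRing R] [StarRing R]
    {U V : Matrix n n R} (hU : IsUnit U.det) (hV : IsUnit V.det) :
    (Vᴴ)⁻¹ * (Vᴴ * V - Uᴴ * U) * U⁻¹ = V * U⁻¹ - ((V * U⁻¹)⁻¹)ᴴ := by
  have hVH : IsUnit Vᴴ.det := by rwa [det_conjTranspose, isUnit_star]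
  rw [mul_inv_rev, nonsing_inv_nonsing_inv U hU, conjTranspose_mul, conjTranspose_nonsing_inv,
    Matrix.mul_sub, Matrix.sub_mul, ← Matrix.mul_assoc, nonsing_inv_mul _ hVH, Matrix.one_mul,
    Matrix.mul_assoc, Matrix.mul_assoc, mul_nonsing_inv _ hU, Matrix.mul_one]

variable {𝕜 : Type*} [RCLike 𝕜]

theorem isUnit_det_of_posDef_conjTranspose_mul_self {U : Matrix n n 𝕜} (h : (Uᴴ * U).PosDef) :
    IsUnit U.det := by
  have h' := (isUnit_iff_isUnit_det _).mp h.isUnit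
  rw [det_mul] at h'
  exact isUnit_of_mul_isUnit_right h'

theorem BlockTriangular.norm_sub_one_apply_le {X : Matrix n n 𝕜} (hb : Function.Injective b)
    (hX : X.BlockTriangular b) (hpos : ∀ i, 0 < X i i) (hdet : IsUnit X.det) (i j : n) :
    ‖(X - 1) i j‖ ≤ ‖(X - (X⁻¹)ᴴ) i j‖ := by
  have : Invertible X := X.invertibleOfIsUnitDet hdet
  rcases lt_trichotomy (b i) (b j) with h | h | h
  · have hij : i ≠ j := fun e => h.ne (congrArg b e)
    rw [sub_apply, sub_apply, conjTranspose_apply, blockTriangular_inv_of_blockTriangular hX h,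
      one_apply_ne hij, star_zero]
  · obtain rfl := hb h
    rw [sub_apply, sub_apply, one_apply_eq, conjTranspose_apply, hX.inv_apply_self hb hdet,
      star_inv₀, (hpos i).le.isSelfAdjoint.star_eq]
    exact RCLike.norm_sub_one_le_norm_sub_inv (hpos i)
  · have hij : i ≠ j := fun e => h.ne' (congrArg b e)
    rw [sub_apply, hX h, one_apply_ne hij, sub_zero, norm_zero]
    exact norm_nonneg _

theorem BlockTriangular.pos_apply_self_mul_inv {U V : Matrix n n 𝕜} (hb : Function.Injective b)
    (hU : U.BlockTriangular b) (hV : V.BlockTriangular b) (hUpos : ∀ i, 0 < U i i)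
    (hVpos : ∀ i, 0 < V i i) (hUdet : IsUnit U.det) (i : n) : 0 < (V * U⁻¹) i i := by
  have : Invertible U := U.invertibleOfIsUnitDet hUdet
  rw [hV.mul_apply_self hb (blockTriangular_inv_of_blockTriangular hU), hU.inv_apply_self hb hUdet]
  exact mul_pos (hVpos i) (inv_pos.mpr (hUpos i))

section L2OpNorm

open scoped Norms.L2Operator

theorem BlockTriangular.l2_opNorm_sub_le {U V : Matrix n n 𝕜} (hb : Function.Injective b)
    (hU : U.BlockTriangular b) (hV : V.BlockTriangular b) (hUpos : ∀ i, 0 < U i i)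
    (hVpos : ∀ i, 0 < V i i) (hUdet : IsUnit U.det) (hVdet : IsUnit V.det) :
    ‖U - V‖ ≤ Fintype.card n ^ 2 * ‖(Vᴴ)⁻¹‖ * ‖Uᴴ * U - Vᴴ * V‖ * ‖U⁻¹‖ * ‖U‖ := by
  set X := V * U⁻¹
  have : Invertible U := U.invertibleOfIsUnitDet hUdet
  have hX : X.BlockTriangular b := hV.mul (blockTriangular_inv_of_blockTriangular hU)
  have hXdet : IsUnit X.det := by
    rw [det_mul]
    exact hVdet.mul (isUnit_nonsing_inv_det U hUdet)
  have hVU : V - U = (X - 1) * U := by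
    rw [Matrix.sub_mul, Matrix.one_mul, Matrix.mul_assoc, nonsing_inv_mul U hUdet, Matrix.mul_one]
  calc ‖U - V‖ = ‖(X - 1) * U‖ := by rw [norm_sub_rev, hVU]
    _ ≤ ‖X - 1‖ * ‖U‖ := l2_opNorm_mul _ _
    _ ≤ Fintype.card n * Fintype.card n * ‖X - (X⁻¹)ᴴ‖ * ‖U‖ := by
      gcongr
      exact l2_opNorm_le_of_norm_apply_le
        (hX.norm_sub_one_apply_le hb (hU.pos_apply_self_mul_inv hb hV hUpos hVpos hUdet) hXdet)
    _ = Fintype.card n ^ 2 * ‖(Vᴴ)⁻¹ * (Vᴴ * V - Uᴴ * U) * U⁻¹‖ * ‖U‖ := by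
      rw [conjTranspose_inv_mul_sub_mul_inv hUdet hVdet, sq]
    _ ≤ Fintype.card n ^ 2 * (‖(Vᴴ)⁻¹‖ * ‖Uᴴ * U - Vᴴ * V‖ * ‖U⁻¹‖) * ‖U‖ := by
      gcongr
      refine (l2_opNorm_mul _ _).trans ?_
      gcongr
      exact (l2_opNorm_mul _ _).trans_eq (by rw [norm_sub_rev])
    _ = _ := by ring

theorem BlockTriangular.eq_of_conjTranspose_mul_self_eq {U V : Matrix n n 𝕜}
    (hb : Function.Injective b) (hU : U.BlockTriangular b) (hV : V.BlockTriangular b)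
    (hUpos : ∀ i, 0 < U i i) (hVpos : ∀ i, 0 < V i i) (hUdet : IsUnit U.det)
    (hVdet : IsUnit V.det) (h : Uᴴ * U = Vᴴ * V) : U = V := by
  have := hU.l2_opNorm_sub_le hb hV hUpos hVpos hUdet hVdet
  rw [h, sub_self, norm_zero, mul_zero, zero_mul, zero_mul] at this
  exact sub_eq_zero.mp (norm_le_zero_iff.mp this)

end L2OpNorm

theorem BlockTriangular.exists_pos_diag_conjTranspose_mul_self_eq {V : Matrix n n 𝕜} (hV : V.BlockTriangular b)
    (hdiag : ∀ i, V i i ≠ 0) :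
    ∃ U : Matrix n n 𝕜, U.BlockTriangular b ∧ (∀ i, 0 < U i i) ∧ Uᴴ * U = Vᴴ * V := by
  let d : n → 𝕜 := fun i => ‖V i i‖ / V i i
  have hd : (fun i => star (d i) * d i) = fun _ => 1 := funext fun i => by
    rw [RCLike.star_def, map_div₀, RCLike.conj_ofReal, div_mul_div_comm, RCLike.conj_mul, sq,
      div_self (by simpa using hdiag i)]
  refine ⟨diagonal d * V, (blockTriangular_diagonal d).mul hV, fun i => ?_, ?_⟩
  · rw [diagonal_mul, div_mul_cancel₀ _ (hdiag i)]
    exact RCLike.ofReal_pos.mpr (norm_pos_iff.mpr (hdiag i))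
  · rw [conjTranspose_mul, diagonal_conjTranspose, Matrix.mul_assoc, ← Matrix.mul_assoc _ _ V,
      diagonal_mul_diagonal]
    simp only [Pi.star_apply, hd, diagonal_one, Matrix.one_mul]

end Triangular

section Cholesky

variable {𝕜 : Type*} [RCLike 𝕜] {n : Type*} [Fintype n] [DecidableEq n]

theorem exists_isUpperTriangular_conjTranspose_mul_self_eq [LinearOrder n]
    [LocallyFiniteOrderBot n] {P : Matrix n n 𝕜} (hP : P.PosSemidef) :
    ∃ R : Matrix n n 𝕜, R.IsUpperTriangular ∧ Rᴴ * R = P := by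
  open scoped MatrixOrder in
  obtain ⟨B, rfl⟩ : ∃ B : Matrix n n 𝕜, P = Bᴴ * B :=
    ⟨CFC.sqrt P, by rw [← star_eq_conjTranspose, (CFC.sqrt_nonneg P).isSelfAdjoint.star_eq,
      CFC.sqrt_mul_sqrt_self P hP.nonneg]⟩
  let col : n → EuclideanSpace 𝕜 n := fun j => WithLp.toLp 2 (Bᵀ j)
  let q := InnerProductSpace.gramSchmidtOrthonormalBasis finrank_euclideanSpace col
  refine ⟨q.toBasis.toMatrix col,
    InnerProductSpace.gramSchmidtOrthonormalBasis_inv_isUpperTriangular _ _, ?_⟩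
  ext j k
  simp only [mul_apply, conjTranspose_apply, Module.Basis.toMatrix_apply,
    OrthonormalBasis.coe_toBasis_repr_apply, OrthonormalBasis.repr_apply_apply, RCLike.star_def,
    inner_conj_symm, q.sum_inner_mul_inner, col, EuclideanSpace.inner_toLp_toLp]
  simp [dotProduct, mul_comm]

theorem PosDef.exists_isUpperTriangular_pos_diag [LinearOrder n] [LocallyFiniteOrderBot n]
    {P : Matrix n n 𝕜} (hP : P.PosDef) :
    ∃ U : Matrix n n 𝕜, U.IsUpperTriangular ∧ (∀ i, 0 < U i i) ∧ Uᴴ * U = P := by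
  obtain ⟨R, hR, rfl⟩ := exists_isUpperTriangular_conjTranspose_mul_self_eq hP.posSemidef
  have hdet : R.det ≠ 0 := fun h => hP.det_pos.ne' (by rw [det_mul, h, mul_zero])
  rw [det_of_isUpperTriangular hR, Finset.prod_ne_zero_iff] at hdet
  exact hR.exists_pos_diag_conjTranspose_mul_self_eq fun i => hdet i (Finset.mem_univ i)

end Cholesky

section Bounds

open scoped Norms.L2Operator MatrixOrder

variable {n : Type*} [Fintype n] [DecidableEq n]

theorem algebraMap_real_eq_smul_one {𝕜 : Type*} [RCLike 𝕜] (r : ℝ) :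
    algebraMap ℝ (Matrix n n 𝕜) r = (r : 𝕜) • 1 := by
  rw [Algebra.algebraMap_eq_smul_one, RCLike.real_smul_eq_coe_smul (K := 𝕜)]

theorem l2_opNorm_le_sqrt_of_posSemidef_smul_one_sub {U : Matrix n n ℂ} {r : ℝ} (hr : 0 ≤ r)
    (h : ((r : ℂ) • 1 - Uᴴ * U).PosSemidef) : ‖U‖ ≤ √r :=
  norm_le_sqrt_of_star_mul_self_le (a := U) hr (by rwa [algebraMap_real_eq_smul_one, le_iff])

theorem l2_opNorm_inv_le_sqrt_of_posSemidef_sub_smul_one {U : Matrix n n ℂ} {r : ℝ} (hr : 0 < r)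
    (hU : IsUnit U.det) (h : (Uᴴ * U - (r : ℂ) • 1).PosSemidef) : ‖U⁻¹‖ ≤ √r⁻¹ := by
  obtain ⟨u, rfl⟩ := (isUnit_iff_isUnit_det U).mpr hU
  rw [← coe_units_inv]
  exact norm_inv_le_sqrt_of_algebraMap_le_star_mul_self (u := u) hr
    (by rwa [algebraMap_real_eq_smul_one, le_iff])

theorem BlockTriangular.l2_opNorm_sub_le_of_loewner_bounds {α : Type*} [LinearOrder α]
    {b : n → α} {U V : Matrix n n ℂ} (hb : Function.Injective b) (hU : U.BlockTriangular b)
    (hV : V.BlockTriangular b) (hUpos : ∀ i, 0 < U i i) (hVpos : ∀ i, 0 < V i i)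
    (hUdet : IsUnit U.det) (hVdet : IsUnit V.det) {ε : ℝ} (hε : 0 < ε)
    (hUε : (Uᴴ * U - (ε : ℂ) • 1).PosSemidef) (hUε' : (((ε⁻¹ : ℝ) : ℂ) • 1 - Uᴴ * U).PosSemidef)
    (hVε : (Vᴴ * V - (ε : ℂ) • 1).PosSemidef) :
    ‖U - V‖ ≤ Fintype.card n ^ 2 * √ε⁻¹ ^ 3 * ‖Uᴴ * U - Vᴴ * V‖ := by
  have hVinv : ‖(Vᴴ)⁻¹‖ ≤ √ε⁻¹ := by
    rw [← conjTranspose_nonsing_inv, l2_opNorm_conjTranspose]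
    exact l2_opNorm_inv_le_sqrt_of_posSemidef_sub_smul_one hε hVdet hVε
  calc ‖U - V‖
      ≤ Fintype.card n ^ 2 * ‖(Vᴴ)⁻¹‖ * ‖Uᴴ * U - Vᴴ * V‖ * ‖U⁻¹‖ * ‖U‖ :=
        hU.l2_opNorm_sub_le hb hV hUpos hVpos hUdet hVdet
    _ ≤ Fintype.card n ^ 2 * √ε⁻¹ * ‖Uᴴ * U - Vᴴ * V‖ * √ε⁻¹ * √ε⁻¹ := by
        gcongr
        · exact l2_opNorm_inv_le_sqrt_of_posSemidef_sub_smul_one hε hUdet hUε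
        · exact l2_opNorm_le_sqrt_of_posSemidef_smul_one_sub (by positivity) hUε'
    _ = Fintype.card n ^ 2 * √ε⁻¹ ^ 3 * ‖Uᴴ * U - Vᴴ * V‖ := by ring

end Bounds

end Matrix

namespace NLFT

open scoped Matrix.Norms.L2Operator

theorem opNorm_eq_l2_opNorm {m : Type*} [Fintype m] [DecidableEq m] (M : Matrix m m ℂ) :
    opNorm M = ‖M‖ :=
  rfl

def triangularOrder {n : ℕ} (a : Fin 2) : Equiv.Perm (Fin n) :=
  if a = 0 then 1 else Fin.revPerm

theorem triangularOrder_involutive {n : ℕ} (a : Fin 2) :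
    Function.Involutive (triangularOrder (n := n) a) := by
  fin_cases a <;> simp [triangularOrder, Function.Involutive]

theorem triangular_iff {n : ℕ} {a : Fin 2} {M : Mat n} :
    Triangular a M ↔ M.BlockTriangular (triangularOrder a) ∧ ∀ i, 0 < M i i := by
  refine and_congr ?_ (forall_congr' fun i => by rw [Complex.pos_iff, eq_comm])
  fin_cases a <;> simp [triangularOrder, BlockTriangular]

theorem exists_triangular {n : ℕ} (a : Fin 2) {P : Mat n} (hP : P.PosDef) :
    ∃ U : Mat n, Triangular a U ∧ Uᴴ * U = P := by
  set σ := triangularOrder (n := n) a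
  obtain ⟨R, hR, hpos, hRP⟩ := (hP.submatrix σ.injective).exists_isUpperTriangular_pos_diag
  refine ⟨R.submatrix σ σ, triangular_iff.mpr ⟨hR.submatrix, fun i => hpos (σ i)⟩, ?_⟩
  rw [conjTranspose_submatrix, submatrix_mul_equiv _ _ _ σ, hRP, submatrix_submatrix,
    (triangularOrder_involutive a).comp_self, submatrix_id_id]

/-- Cholesky factorization: existence, uniqueness, and Lipschitz continuity on the set of
positive definite Hermitian matrices with eigenvalues in `[ε, ε⁻¹]`. -/
theorem statement_5 (n : ℕ) (hn : 1 ≤ n) (a : Fin 2) :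
    (∀ P : Mat n, P.PosDef → ∃! U : Mat n, Triangular a U ∧ Uᴴ * U = P) ∧
    ∀ ε : ℝ, 0 < ε → ∃ C : ℝ, 0 < C ∧
      ∀ P P' U U' : Mat n, P.PosDef → P'.PosDef →
        (P - (ε : ℂ) • (1 : Mat n)).PosSemidef →
        (((ε⁻¹ : ℝ) : ℂ) • (1 : Mat n) - P).PosSemidef →
        (P' - (ε : ℂ) • (1 : Mat n)).PosSemidef →
        (((ε⁻¹ : ℝ) : ℂ) • (1 : Mat n) - P').PosSemidef →
        Triangular a U → Uᴴ * U = P → Triangular a U' → U'ᴴ * U' = P' →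
        opNorm (U - U') ≤ C * opNorm (P - P') := by
  have hσ := (triangularOrder (n := n) a).injective
  have hn' : (0 : ℝ) < n := by exact_mod_cast hn
  refine ⟨fun P hP => ?_, fun ε hε => ⟨n ^ 2 * √ε⁻¹ ^ 3, by positivity, ?_⟩⟩
  · obtain ⟨U, hU, rfl⟩ := exists_triangular a hP
    refine ⟨U, ⟨hU, rfl⟩, fun V ⟨hV, hVU⟩ => ?_⟩
    rw [triangular_iff] at hU hV
    exact hV.1.eq_of_conjTranspose_mul_self_eq hσ hU.1 hV.2 hU.2
      (isUnit_det_of_posDef_conjTranspose_mul_self (hVU ▸ hP))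
      (isUnit_det_of_posDef_conjTranspose_mul_self hP) hVU
  · rintro P P' U U' hP hP' hPε hPε' hP'ε - hU rfl hU' rfl
    rw [triangular_iff] at hU hU'
    rw [opNorm_eq_l2_opNorm, opNorm_eq_l2_opNorm]
    simpa using hU.1.l2_opNorm_sub_le_of_loewner_bounds hσ hU'.1 hU.2 hU'.2
      (isUnit_det_of_posDef_conjTranspose_mul_self hP)
      (isUnit_det_of_posDef_conjTranspose_mul_self hP') hε hPε hPε' hP'ε

end NLFT
end
end

section
/- Let c ≤ d be integers, let α : {0,1} → {0,1}, and let F = (F_j)_{j∈ℤ} be a finitely supported sequence of contractive matrices supported in [c,d]. Write [[A,B],[C,D]] := 𝓕_α(F) and [[E_j,F_j],[G_j,H_j]] := Y_α(F_j). Then the blocks A, B, C, D are matrix Laurent polynomials in z whose Fourier coefficients vanish outside [c−d, 0], [c, d], [−d, −c], [0, d−c] respectively; moreover Â(0) = ∏_j^{→} E_j and D̂(0) = ∏_j^{→} H_j (products over the support in increasing order of j), so that Â(0) ∈ 𝓖_{α(0)} and D̂(0) ∈ 𝓖_{α(1)}. If in addition c = 0, then B̂(0)·D̂(0)^{−1}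 = F₀·H₀^{−1} and Ĉ(0)·Â(0)^{−1} = G₀·E₀^{−1}. -/
open MeasureTheory Matrix Filter
open scoped Real ENNReal Topology ComplexOrder

noncomputable section

namespace NLFT

/-!
Write `P[a,b]` for the ordered product of the layers `Ad(z^j) Y_α(F_j)`, `a ≤ j ≤ b`, so that
`P[a,b] = Ad(z^a) Y_α(F_a) * P[a+1,b]`, and let `A', B', C', D'` be the blocks of `P[a+1,b]`.
The layer at `a` has blocks `E, z^a F, z^(-a) G, H`, so by downward induction on `a` the blocks
of `P[a,b]` are Laurent polynomials with frequencies in `[a-b, 0]`, `[a, b]`, `[-b, -a]`,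
`[0, b-a]`. As the frequencies of `B'` and `C'` avoid `a` and `-a`, the new layer gives
`Â(0) = E Â'(0)`, `D̂(0) = H D̂'(0)`, `B̂(a) = F D̂'(0)` and `Ĉ(-a) = G Â'(0)`. The constant
coefficients are products of triangular matrices with positive diagonal, hence invertible, and
`B̂(a) D̂(0)⁻¹ = F H⁻¹`, `Ĉ(-a) Â(0)⁻¹ = G E⁻¹` follow. Finally `Y_α(0) = 1`, because a triangular
unitary matrix with positive diagonal is the identity, so `𝓕_α(F)` is `P[c,d]`.
-/

section Fourier

variable {ι κ : Type*}

instance : IsProbabilityMeasure μ :=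
  haveI : Fact (0 < 2 * Real.pi) := ⟨Real.two_pi_pos⟩
  Measure.isProbabilityMeasure_map AddCircle.continuous_toCircle.aemeasurable

lemma continuous_coe_zpow (m : ℤ) : Continuous fun z : Circle => (z : ℂ) ^ m :=
  continuous_subtype_val.zpow₀ m fun z => Or.inl (Circle.coe_ne_zero z)

lemma integral_coe_zpow (m : ℤ) :
    ∫ z : Circle, (z : ℂ) ^ m ∂μ = if m = 0 then 1 else 0 := by
  have : Fact (0 < 2 * Real.pi) := ⟨Real.two_pi_pos⟩
  rw [μ, integral_map AddCircle.continuous_toCircle.aemeasurable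
    (continuous_coe_zpow m).aestronglyMeasurable]
  have key : ∀ x : AddCircle (2 * Real.pi), (AddCircle.toCircle x : ℂ) ^ m = fourier m x := by
    intro x
    rw [fourier_apply, AddCircle.toCircle_zsmul, Circle.coe_zpow]
  simp_rw [key]
  split_ifs with hm
  · subst hm; simp
  · exact integral_eq_zero_of_add_right_eq_neg (μ := AddCircle.haarAddCircle)
      (fourier_add_half_inv_index hm Real.two_pi_pos)

lemma integrable_zpow_mul_apply {f : Circle → Matrix ι κ ℂ} (hf : Continuous f) (k : ℤ)
    (i : ι) (j : κ) : Integrable (fun z : Circle => (z : ℂ) ^ k * f z i j) μ :=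
  ((continuous_coe_zpow k).mul (hf.matrix_elem i j)).integrable_of_hasCompactSupport
    (HasCompactSupport.of_compactSpace _)

variable [Fintype ι] [Fintype κ]

lemma mFourierCoeff_const (X : Matrix ι κ ℂ) (k : ℤ) :
    mFourierCoeff (fun _ => X) k = if k = 0 then X else 0 := by
  ext i j
  simp only [mFourierCoeff, of_apply, integral_mul_const, integral_coe_zpow, neg_eq_zero]
  split_ifs <;> simp

lemma mFourierCoeff_zpow_smul (f : Circle → Matrix ι κ ℂ) (m k : ℤ) :
    mFourierCoeff (fun z => (z : ℂ) ^ m • f z) k = mFourierCoeff f (k - m) := by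
  ext i j
  simp only [mFourierCoeff, of_apply, Matrix.smul_apply, smul_eq_mul, ← mul_assoc,
    ← zpow_add₀ (Circle.coe_ne_zero _)]
  congr! 4
  ring

lemma mFourierCoeff_add {f g : Circle → Matrix ι κ ℂ} (hf : Continuous f) (hg : Continuous g)
    (k : ℤ) : mFourierCoeff (fun z => f z + g z) k = mFourierCoeff f k + mFourierCoeff g k := by
  ext i j
  simp only [mFourierCoeff, of_apply, Matrix.add_apply, mul_add]
  exact integral_add (integrable_zpow_mul_apply hf _ i j) (integrable_zpow_mul_apply hg _ i j)

lemma mFourierCoeff_sum {β : Type*} (s : Finset β) {f : β → Circle → Matrix ι κ ℂ}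
    (hf : ∀ b ∈ s, Continuous (f b)) (k : ℤ) :
    mFourierCoeff (fun z => ∑ b ∈ s, f b z) k = ∑ b ∈ s, mFourierCoeff (f b) k := by
  ext i j
  simp only [mFourierCoeff, of_apply, Matrix.sum_apply, Finset.mul_sum]
  exact integral_finsetSum s fun b hb => integrable_zpow_mul_apply (hf b hb) _ i j

lemma mFourierCoeff_const_mul {ι' : Type*} [Fintype ι'] (X : Matrix ι' ι ℂ)
    {f : Circle → Matrix ι κ ℂ} (hf : Continuous f) (k : ℤ) :
    mFourierCoeff (fun z => X * f z) k = X * mFourierCoeff f k := by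
  ext i j
  simp only [mFourierCoeff, of_apply, mul_apply, Finset.mul_sum, mul_left_comm _ (X i _)]
  rw [integral_finsetSum _ fun l _ => (integrable_zpow_mul_apply hf (-k) l j).const_mul _]
  simp only [integral_const_mul]

lemma mFourierCoeff_mul_add_zpow_smul_mul {f g : Circle → Matrix ι κ ℂ} (hf : Continuous f)
    (hg : Continuous g) (X Y : Matrix ι ι ℂ) (m k : ℤ) :
    mFourierCoeff (fun z => X * f z + (z : ℂ) ^ m • (Y * g z)) k =
      X * mFourierCoeff f k + Y * mFourierCoeff g (k - m) := by
  rw [mFourierCoeff_add (f := fun z => X * f z) (g := fun z => (z : ℂ) ^ m • (Y * g z))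
    (continuous_const.matrix_mul hf)
    ((continuous_coe_zpow m).smul (continuous_const.matrix_mul hg)), mFourierCoeff_const_mul X hf,
    mFourierCoeff_zpow_smul, mFourierCoeff_const_mul Y hg]

lemma mFourierCoeff_eq_of_eq_sum {f : Circle → Matrix ι κ ℂ} {s : Finset ℤ}
    {Q : ℤ → Matrix ι κ ℂ} (hQ : ∀ z, f z = ∑ k ∈ s, (z : ℂ) ^ k • Q k) (m : ℤ) :
    mFourierCoeff f m = if m ∈ s then Q m else 0 := by
  have hterm : ∀ k ∈ s, Continuous fun z : Circle => (z : ℂ) ^ k • Q k := fun k _ =>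
    (continuous_coe_zpow k).smul continuous_const
  rw [funext hQ, mFourierCoeff_sum s hterm]
  simp only [mFourierCoeff_zpow_smul (fun _ => Q _), mFourierCoeff_const, sub_eq_zero]
  exact Finset.sum_ite_eq s m Q

end Fourier

def IsLaurentPolyOn {ι κ : Type*} (f : Circle → Matrix ι κ ℂ) (s : Finset ℤ) : Prop :=
  ∃ Q : ℤ → Matrix ι κ ℂ, ∀ z, f z = ∑ k ∈ s, (z : ℂ) ^ k • Q k

namespace IsLaurentPolyOn

variable {ι κ : Type*} {f g : Circle → Matrix ι κ ℂ} {s t : Finset ℤ}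

lemma continuous (h : IsLaurentPolyOn f s) : Continuous f := by
  obtain ⟨Q, hQ⟩ := h
  rw [funext hQ]
  exact continuous_finsetSum s fun k _ => (continuous_coe_zpow k).smul continuous_const

variable [Fintype ι] [Fintype κ]

lemma mFourierCoeff_eq_zero (h : IsLaurentPolyOn f s) {m : ℤ} (hm : m ∉ s) :
    mFourierCoeff f m = 0 := by
  obtain ⟨Q, hQ⟩ := h
  rw [mFourierCoeff_eq_of_eq_sum hQ, if_neg hm]

lemma eq_sum_mFourierCoeff (h : IsLaurentPolyOn f s) (z : Circle) :
    f z = ∑ k ∈ s, (z : ℂ) ^ k • mFourierCoeff f k := by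
  obtain ⟨Q, hQ⟩ := h
  rw [hQ z]
  exact Finset.sum_congr rfl fun k hk => by rw [mFourierCoeff_eq_of_eq_sum hQ, if_pos hk]

lemma mono (h : IsLaurentPolyOn f s) (hst : s ⊆ t) : IsLaurentPolyOn f t :=
  ⟨mFourierCoeff f, fun z => by
    rw [h.eq_sum_mFourierCoeff z]
    exact Finset.sum_subset hst fun k _ hk => by rw [h.mFourierCoeff_eq_zero hk, smul_zero]⟩

lemma add (hf : IsLaurentPolyOn f s) (hg : IsLaurentPolyOn g s) :
    IsLaurentPolyOn (fun z => f z + g z) s :=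
  ⟨fun k => mFourierCoeff f k + mFourierCoeff g k, fun z => by
    simp only [hf.eq_sum_mFourierCoeff z, hg.eq_sum_mFourierCoeff z, smul_add,
      Finset.sum_add_distrib]⟩

lemma const_mul {ι' : Type*} [Fintype ι'] (h : IsLaurentPolyOn f s) (X : Matrix ι' ι ℂ) :
    IsLaurentPolyOn (fun z => X * f z) s :=
  ⟨fun k => X * mFourierCoeff f k, fun z => by
    simp only [h.eq_sum_mFourierCoeff z, Matrix.mul_sum, Matrix.mul_smul]⟩

lemma zpow_smul (h : IsLaurentPolyOn f s) (m : ℤ) :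
    IsLaurentPolyOn (fun z => (z : ℂ) ^ m • f z) (s.map (addLeftEmbedding m)) :=
  ⟨fun k => mFourierCoeff f (k - m), fun z => by
    simp only [h.eq_sum_mFourierCoeff z, Finset.smul_sum, smul_smul, Finset.sum_map,
      addLeftEmbedding_apply, add_sub_cancel_left, ← zpow_add₀ (Circle.coe_ne_zero z)]⟩

lemma mul_add_zpow_smul_mul {u : Finset ℤ} (hf : IsLaurentPolyOn f s)
    (hg : IsLaurentPolyOn g t) (X Y : Matrix ι ι ℂ) (m : ℤ) (hs : s ⊆ u)
    (ht : t.map (addLeftEmbedding m) ⊆ u) :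
    IsLaurentPolyOn (fun z => X * f z + (z : ℂ) ^ m • (Y * g z)) u :=
  ((hf.const_mul X).mono hs).add (((hg.const_mul Y).zpow_smul m).mono ht)

end IsLaurentPolyOn

lemma isLaurentPolyOn_const {ι κ : Type*} (X : Matrix ι κ ℂ) :
    IsLaurentPolyOn (fun _ => X) {0} :=
  ⟨fun _ => X, fun z => by simp⟩

lemma isLaurentPolyOn_zero {ι κ : Type*} (s : Finset ℤ) :
    IsLaurentPolyOn (fun _ => (0 : Matrix ι κ ℂ)) s :=
  ⟨0, fun z => by simp⟩

lemma _root_.List.prod_map_filter_of_eq_one {β M : Type*} [Monoid M] (p : β → Prop)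
    [DecidablePred p] {g : β → M} (hg : ∀ x, ¬p x → g x = 1) (l : List β) :
    ((l.filter (p ·)).map g).prod = (l.map g).prod := by
  induction l with
  | nil => rfl
  | cons x l ih => by_cases hx : p x <;> simp [hx, hg x, ih]

lemma _root_.Finset.sort_filter {β : Type*} [LinearOrder β] (s : Finset β) (p : β → Prop)
    [DecidablePred p] : (s.filter p).sort (· ≤ ·) = (s.sort (· ≤ ·)).filter (p ·) := by
  have hl : ((s.sort (· ≤ ·)).filter (p ·)).toFinset = s.filter p := by
    ext; simp
  rw [← hl, List.toFinset_sort _ ((s.sort_nodup _).filter _)]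
  exact (s.pairwise_sort _).filter _

lemma _root_.Finset.sort_Icc_eq_cons {a b : ℤ} (h : a ≤ b) :
    (Finset.Icc a b).sort (· ≤ ·) = a :: (Finset.Icc (a + 1) b).sort (· ≤ ·) := by
  rw [← Finset.insert_Icc_add_one_left_eq_Icc h, Finset.sort_insert _
    (fun x hx => by simp at hx; omega) (by simp)]

section Triangular

variable {n : ℕ} {a : Fin 2}

lemma Triangular.blockTriangular {M : Mat n} (h : Triangular a M) :
    M.BlockTriangular id ∨ M.BlockTriangular OrderDual.toDual := by
  by_cases ha : a = 0
  · exact .inl fun i j hij => h.1 i j (by simpa [ha] using hij)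
  · exact .inr fun i j hij => h.1 i j (by simpa [ha] using hij)

lemma Triangular.one : Triangular a (1 : Mat n) :=
  ⟨fun i j hij => one_apply_ne (by split_ifs at hij <;> omega), fun i => by simp⟩

lemma Triangular.mul {M N : Mat n} (hM : Triangular a M) (hN : Triangular a N) :
    Triangular a (M * N) := by
  have hne : ∀ i j k, M i k * N k j ≠ 0 →
      ¬(if a = 0 then k < i else i < k) ∧ ¬(if a = 0 then j < k else k < j) :=
    fun i j k h => ⟨fun hik => h (by rw [hM.1 i k hik, zero_mul]),
      fun hkj => h (by rw [hN.1 k j hkj, mul_zero])⟩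
  refine ⟨fun i j hij => ?_, fun i => ?_⟩
  · refine (mul_apply ..).trans (Finset.sum_eq_zero fun k _ => by_contra fun h => ?_)
    obtain ⟨hik, hkj⟩ := hne i j k h
    split_ifs at hij hik hkj <;> omega
  · have hii : (M * N) i i = M i i * N i i := by
      refine (mul_apply ..).trans (Finset.sum_eq_single i (fun k _ hk => by_contra fun h => ?_)
        (by simp))
      obtain ⟨hik, hki⟩ := hne i i k h
      split_ifs at hik hki <;> omega
    rw [hii, Complex.mul_re, Complex.mul_im, (hM.2 i).2, (hN.2 i).2]
    exact ⟨by simpa using mul_pos (hM.2 i).1 (hN.2 i).1, by simp⟩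

lemma Triangular.list_prod {l : List (Mat n)} (h : ∀ M ∈ l, Triangular a M) :
    Triangular a l.prod := by
  induction l with
  | nil => exact .one
  | cons M l ih =>
    rw [List.forall_mem_cons] at h
    exact h.1.mul (ih h.2)

lemma Triangular.isUnit {M : Mat n} (h : Triangular a M) : IsUnit M := by
  have hdet : M.det = ∏ i, M i i := by
    rcases h.blockTriangular with hb | hb
    · exact det_of_isUpperTriangular hb
    · exact det_of_isLowerTriangular M hb
  refine (isUnit_iff_isUnit_det M).2 (hdet ▸ IsUnit.mk0 _ ?_)
  exact Finset.prod_ne_zero_iff.2 fun i _ hi => by simpa [hi] using (h.2 i).1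

lemma _root_.Matrix.BlockTriangular.apply_eq_zero_of_unitary {m β : Type*} [Fintype m]
    [DecidableEq m] [LinearOrder β] {A : Matrix m m ℂ} {b : m → β} (hA : A.BlockTriangular b)
    (hb : b.Injective) (hU : Aᴴ * A = 1) {i j : m} (hij : i ≠ j) : A i j = 0 := by
  have : Invertible A := invertibleOfLeftInverse _ _ hU
  have hAH : Aᴴ.BlockTriangular b :=
    inv_eq_left_inv hU ▸ blockTriangular_inv_of_blockTriangular hA
  rcases (hb.ne hij).lt_or_gt with h | h
  · simpa using hAH h
  · exact hA h

lemma Triangular.eq_one_of_unitary {A : Mat n} (h : Triangular a A) (hU : Aᴴ * A = 1) :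
    A = 1 := by
  have hoff : ∀ i j, i ≠ j → A i j = 0 := by
    rcases h.blockTriangular with hb | hb
    · exact fun i j => hb.apply_eq_zero_of_unitary Function.injective_id hU
    · exact fun i j => hb.apply_eq_zero_of_unitary OrderDual.toDual.injective hU
  ext i j
  rcases eq_or_ne i j with rfl | hij
  · have hii : star (A i i) * A i i = 1 := by
      have hUii := congrFun (congrFun hU i) i
      rwa [mul_apply, Finset.sum_eq_single i (fun k _ hk => by simp [hoff k i hk]) (by simp),
        conjTranspose_apply, one_apply_eq] at hUii
    have hre : (A i i).re * (A i i).re = 1 := by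
      simpa [Complex.mul_re, (h.2 i).2] using congrArg Complex.re hii
    refine Complex.ext ?_ (by simp [(h.2 i).2])
    rw [one_apply_eq, Complex.one_re]
    nlinarith [(h.2 i).1]
  · rw [hoff i j hij, one_apply_ne hij]

end Triangular

lemma Yc_triangular {n : ℕ} (α : Fin 2 → Fin 2) (F : Mat n) :
    Triangular (α 0) (Yc α F).toBlocks₁₁ ∧ Triangular (α 1) (Yc α F).toBlocks₂₂ := by
  rw [Yc]
  split_ifs with h
  · exact h.choose_spec.1.2
  · simpa [← fromBlocks_one] using ⟨Triangular.one, Triangular.one⟩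

lemma Yc_zero {n : ℕ} (α : Fin 2 → Fin 2) : Yc α (0 : Mat n) = 1 := by
  rw [Yc]
  split_ifs with h
  · obtain ⟨⟨⟨hU, -⟩, hA, hD⟩, hB⟩ := h.choose_spec
    rw [← fromBlocks_toBlocks h.choose, hB] at hU ⊢
    simp only [IsUnitary, fromBlocks_conjTranspose, fromBlocks_multiply, ← fromBlocks_one,
      fromBlocks_inj, conjTranspose_zero, Matrix.zero_mul, Matrix.mul_zero, zero_add] at hU
    obtain ⟨hAC, hCD, -, hDD⟩ := hU
    have hD1 := hD.eq_one_of_unitary hDD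
    have hC0 : h.choose.toBlocks₂₁ = 0 := by
      simpa [hD1] using congrArg conjTranspose hCD
    have hA1 := hA.eq_one_of_unitary (by simpa [hC0] using hAC)
    rw [hA1, hC0, hD1, fromBlocks_one]
  · rfl

section NLFT

variable {n : ℕ}

lemma Ad_one (w : ℂ) : Ad w (1 : Mat2 n) = 1 := by
  simp [Ad, ← fromBlocks_one]

lemma Ad_mul (w : ℂ) (Y P : Mat2 n) :
    Ad w Y * P = fromBlocks
      (Y.toBlocks₁₁ * P.toBlocks₁₁ + w • (Y.toBlocks₁₂ * P.toBlocks₂₁))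
      (Y.toBlocks₁₁ * P.toBlocks₁₂ + w • (Y.toBlocks₁₂ * P.toBlocks₂₂))
      (w⁻¹ • (Y.toBlocks₂₁ * P.toBlocks₁₁) + Y.toBlocks₂₂ * P.toBlocks₂₁)
      (w⁻¹ • (Y.toBlocks₂₁ * P.toBlocks₁₂) + Y.toBlocks₂₂ * P.toBlocks₂₂) := by
  conv_lhs => rw [← fromBlocks_toBlocks P]
  simp only [Ad, fromBlocks_multiply, Matrix.smul_mul]

variable (α : Fin 2 → Fin 2) (F : ℤ → Mat n)

lemma nlftOn_add_one_self (b : ℤ) : nlftOn α F (b + 1) b = fun _ => fromBlocks 1 0 0 1 := by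
  funext z
  simp [nlftOn, fromBlocks_one]

lemma nlftOn_eq_Ad_mul {a b : ℤ} (h : a ≤ b) (z : Circle) :
    nlftOn α F a b z = Ad ((z : ℂ) ^ a) (Yc α (F a)) * nlftOn α F (a + 1) b z := by
  rw [nlftOn, Finset.sort_Icc_eq_cons h, List.map_cons, List.prod_cons, nlftOn]

lemma nlftOn_eq_of_support {a b a' b' : ℤ}
    (h : ∀ j, F j ≠ 0 → (j ∈ Finset.Icc a b ↔ j ∈ Finset.Icc a' b')) (z : Circle) :
    nlftOn α F a b z = nlftOn α F a' b' z := by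
  have hone : ∀ j, ¬F j ≠ 0 → Ad ((z : ℂ) ^ j) (Yc α (F j)) = 1 := fun j hj => by
    rw [not_not.1 hj, Yc_zero, Ad_one]
  have hfilter : (Finset.Icc a b).filter (F · ≠ 0) = (Finset.Icc a' b').filter (F · ≠ 0) := by
    ext j
    simp only [Finset.mem_filter]
    exact ⟨fun ⟨hj, hF⟩ => ⟨(h j hF).1 hj, hF⟩,
      fun ⟨hj, hF⟩ => ⟨(h j hF).2 hj, hF⟩⟩
  have hprod : ∀ a b, nlftOn α F a b z =
      ((((Finset.Icc a b).filter (F · ≠ 0)).sort (· ≤ ·)).map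
        fun j => Ad ((z : ℂ) ^ j) (Yc α (F j))).prod := fun a b => by
    rw [Finset.sort_filter, List.prod_map_filter_of_eq_one _ hone, nlftOn]
  rw [hprod, hprod, hfilter]

lemma natAbs_le_suppBound (hfin : (Function.support F).Finite) {j : ℤ} (hj : F j ≠ 0) :
    j.natAbs ≤ suppBound F := by
  rw [suppBound, dif_pos hfin]
  exact Finset.le_sup (f := fun j : ℤ => j.natAbs) (hfin.mem_toFinset.2 hj)

lemma nlft_eq_nlftOn {c d : ℤ} (hsupp : ∀ j : ℤ, j ∉ Finset.Icc c d → F j = 0) :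
    nlft α F = nlftOn α F c d := by
  have hfin : (Function.support F).Finite :=
    (Finset.Icc c d).finite_toSet.subset fun j hj => by_contra fun h => hj (hsupp j h)
  funext z
  refine nlftOn_eq_of_support α F (fun j hj => ?_) z
  have hN := natAbs_le_suppBound F hfin hj
  have hcd := not_imp_comm.1 (hsupp j) hj
  simp only [Finset.mem_Icc] at hcd ⊢
  omega

end NLFT

section Layers

variable {n : ℕ} (α : Fin 2 → Fin 2) (F : ℤ → Mat n) {a b : ℤ}

lemma blockA_nlftOn (h : a ≤ b) : blockA (nlftOn α F a b) = fun z =>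
    (Yc α (F a)).toBlocks₁₁ * blockA (nlftOn α F (a + 1) b) z +
      (z : ℂ) ^ a • ((Yc α (F a)).toBlocks₁₂ * blockC (nlftOn α F (a + 1) b) z) := by
  funext z
  simp [blockA, blockC, nlftOn_eq_Ad_mul α F h, Ad_mul]

lemma blockB_nlftOn (h : a ≤ b) : blockB (nlftOn α F a b) = fun z =>
    (Yc α (F a)).toBlocks₁₁ * blockB (nlftOn α F (a + 1) b) z +
      (z : ℂ) ^ a • ((Yc α (F a)).toBlocks₁₂ * blockD (nlftOn α F (a + 1) b) z) := by
  funext z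
  simp [blockB, blockD, nlftOn_eq_Ad_mul α F h, Ad_mul]

lemma blockC_nlftOn (h : a ≤ b) : blockC (nlftOn α F a b) = fun z =>
    (Yc α (F a)).toBlocks₂₂ * blockC (nlftOn α F (a + 1) b) z +
      (z : ℂ) ^ (-a) • ((Yc α (F a)).toBlocks₂₁ * blockA (nlftOn α F (a + 1) b) z) := by
  funext z
  simp [blockA, blockC, nlftOn_eq_Ad_mul α F h, Ad_mul, add_comm]

lemma blockD_nlftOn (h : a ≤ b) : blockD (nlftOn α F a b) = fun z =>
    (Yc α (F a)).toBlocks₂₂ * blockD (nlftOn α F (a + 1) b) z +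
      (z : ℂ) ^ (-a) • ((Yc α (F a)).toBlocks₂₁ * blockB (nlftOn α F (a + 1) b) z) := by
  funext z
  simp [blockB, blockD, nlftOn_eq_Ad_mul α F h, Ad_mul, add_comm]

/-- The `min` and `max` only matter for the empty product `a = b + 1`, which is `1`. -/
theorem nlftOn_isLaurentPolyOn (hab : a ≤ b + 1) :
    IsLaurentPolyOn (blockA (nlftOn α F a b)) (Finset.Icc (min (a - b) 0) 0) ∧
    IsLaurentPolyOn (blockB (nlftOn α F a b)) (Finset.Icc a b) ∧
    IsLaurentPolyOn (blockC (nlftOn α F a b)) (Finset.Icc (-b) (-a)) ∧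
    IsLaurentPolyOn (blockD (nlftOn α F a b)) (Finset.Icc 0 (max (b - a) 0)) := by
  induction a, hab using Int.leInductionDown with
  | base =>
    rw [nlftOn_add_one_self]
    exact ⟨(isLaurentPolyOn_const 1).mono (by simp), isLaurentPolyOn_zero _,
      isLaurentPolyOn_zero _, (isLaurentPolyOn_const 1).mono (by simp)⟩
  | pred a hab ih =>
    obtain ⟨hA, hB, hC, hD⟩ := ih
    have h : a - 1 ≤ b := by omega
    rw [blockA_nlftOn α F h, blockB_nlftOn α F h, blockC_nlftOn α F h, blockD_nlftOn α F h,
      sub_add_cancel]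
    refine ⟨hA.mul_add_zpow_smul_mul hC _ _ _ ?_ ?_, hB.mul_add_zpow_smul_mul hD _ _ _ ?_ ?_,
      hC.mul_add_zpow_smul_mul hA _ _ _ ?_ ?_, hD.mul_add_zpow_smul_mul hB _ _ _ ?_ ?_⟩ <;>
    (try rw [Finset.map_add_left_Icc]) <;> exact Finset.Icc_subset_Icc (by omega) (by omega)

theorem mFourierCoeff_blockA_nlftOn_zero (hab : a ≤ b + 1) :
    mFourierCoeff (blockA (nlftOn α F a b)) 0 =
      (((Finset.Icc a b).sort (· ≤ ·)).map fun j => (Yc α (F j)).toBlocks₁₁).prod := by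
  induction a, hab using Int.leInductionDown with
  | base =>
    rw [nlftOn_add_one_self]
    exact (mFourierCoeff_const 1 0).trans (by simp)
  | pred a hab ih =>
    have h : a - 1 ≤ b := by omega
    obtain ⟨hA, -, hC, -⟩ := nlftOn_isLaurentPolyOn α F hab
    rw [blockA_nlftOn α F h, sub_add_cancel,
      mFourierCoeff_mul_add_zpow_smul_mul hA.continuous hC.continuous,
      hC.mFourierCoeff_eq_zero (by simp), ih, Finset.sort_Icc_eq_cons h, sub_add_cancel]
    simp

theorem mFourierCoeff_blockD_nlftOn_zero (hab : a ≤ b + 1) :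
    mFourierCoeff (blockD (nlftOn α F a b)) 0 =
      (((Finset.Icc a b).sort (· ≤ ·)).map fun j => (Yc α (F j)).toBlocks₂₂).prod := by
  induction a, hab using Int.leInductionDown with
  | base =>
    rw [nlftOn_add_one_self]
    exact (mFourierCoeff_const 1 0).trans (by simp)
  | pred a hab ih =>
    have h : a - 1 ≤ b := by omega
    obtain ⟨-, hB, -, hD⟩ := nlftOn_isLaurentPolyOn α F hab
    rw [blockD_nlftOn α F h, sub_add_cancel,
      mFourierCoeff_mul_add_zpow_smul_mul hD.continuous hB.continuous,
      hB.mFourierCoeff_eq_zero (by simp), ih, Finset.sort_Icc_eq_cons h, sub_add_cancel]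
    simp

theorem triangular_mFourierCoeff_blockA_nlftOn_zero (hab : a ≤ b + 1) :
    Triangular (α 0) (mFourierCoeff (blockA (nlftOn α F a b)) 0) := by
  rw [mFourierCoeff_blockA_nlftOn_zero α F hab]
  exact Triangular.list_prod fun M hM => by
    obtain ⟨j, -, rfl⟩ := List.mem_map.1 hM
    exact (Yc_triangular α _).1

theorem triangular_mFourierCoeff_blockD_nlftOn_zero (hab : a ≤ b + 1) :
    Triangular (α 1) (mFourierCoeff (blockD (nlftOn α F a b)) 0) := by
  rw [mFourierCoeff_blockD_nlftOn_zero α F hab]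
  exact Triangular.list_prod fun M hM => by
    obtain ⟨j, -, rfl⟩ := List.mem_map.1 hM
    exact (Yc_triangular α _).2

theorem mFourierCoeff_blockB_nlftOn_mul_inv (hab : a ≤ b) :
    mFourierCoeff (blockB (nlftOn α F a b)) a * (mFourierCoeff (blockD (nlftOn α F a b)) 0)⁻¹ =
      (Yc α (F a)).toBlocks₁₂ * ((Yc α (F a)).toBlocks₂₂)⁻¹ := by
  obtain ⟨-, hB, -, hD⟩ := nlftOn_isLaurentPolyOn α F (a := a + 1) (b := b) (by omega)
  have hB' : mFourierCoeff (blockB (nlftOn α F (a + 1) b)) a = 0 :=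
    hB.mFourierCoeff_eq_zero (by simp)
  set D' := mFourierCoeff (blockD (nlftOn α F (a + 1) b)) 0
  have hD' : IsUnit D'.det := (isUnit_iff_isUnit_det _).1
    (triangular_mFourierCoeff_blockD_nlftOn_zero α F (a := a + 1) (b := b) (by omega)).isUnit
  have hBa : mFourierCoeff (blockB (nlftOn α F a b)) a = (Yc α (F a)).toBlocks₁₂ * D' := by
    rw [blockB_nlftOn α F hab, mFourierCoeff_mul_add_zpow_smul_mul hB.continuous hD.continuous,
      sub_self, hB', Matrix.mul_zero, zero_add]
  have hD0 : mFourierCoeff (blockD (nlftOn α F a b)) 0 = (Yc α (F a)).toBlocks₂₂ * D' := by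
    rw [blockD_nlftOn α F hab, mFourierCoeff_mul_add_zpow_smul_mul hD.continuous hB.continuous,
      zero_sub, neg_neg, hB', Matrix.mul_zero, add_zero]
  rw [hBa, hD0, Matrix.mul_inv_rev, ← mul_assoc, Matrix.mul_nonsing_inv_cancel_right _ _ hD']

theorem mFourierCoeff_blockC_nlftOn_mul_inv (hab : a ≤ b) :
    mFourierCoeff (blockC (nlftOn α F a b)) (-a) *
        (mFourierCoeff (blockA (nlftOn α F a b)) 0)⁻¹ =
      (Yc α (F a)).toBlocks₂₁ * ((Yc α (F a)).toBlocks₁₁)⁻¹ := by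
  obtain ⟨hA, -, hC, -⟩ := nlftOn_isLaurentPolyOn α F (a := a + 1) (b := b) (by omega)
  have hC' : mFourierCoeff (blockC (nlftOn α F (a + 1) b)) (-a) = 0 :=
    hC.mFourierCoeff_eq_zero (by simp)
  set A' := mFourierCoeff (blockA (nlftOn α F (a + 1) b)) 0
  have hA' : IsUnit A'.det := (isUnit_iff_isUnit_det _).1
    (triangular_mFourierCoeff_blockA_nlftOn_zero α F (a := a + 1) (b := b) (by omega)).isUnit
  have hCa : mFourierCoeff (blockC (nlftOn α F a b)) (-a) = (Yc α (F a)).toBlocks₂₁ * A' := by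
    rw [blockC_nlftOn α F hab, mFourierCoeff_mul_add_zpow_smul_mul hC.continuous hA.continuous,
      sub_self, hC', Matrix.mul_zero, zero_add]
  have hA0 : mFourierCoeff (blockA (nlftOn α F a b)) 0 = (Yc α (F a)).toBlocks₁₁ * A' := by
    rw [blockA_nlftOn α F hab, mFourierCoeff_mul_add_zpow_smul_mul hA.continuous hC.continuous,
      zero_sub, hC', Matrix.mul_zero, add_zero]
  rw [hCa, hA0, Matrix.mul_inv_rev, ← mul_assoc, Matrix.mul_nonsing_inv_cancel_right _ _ hA']

end Layers

theorem statement_8_general (n : ℕ) (α : Fin 2 → Fin 2) (c d : ℤ) (hcd : c ≤ d)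
    (F : ℤ → Mat n)
    (hsupp : ∀ j : ℤ, j ∉ Finset.Icc c d → F j = 0) :
    (∀ z : Circle, blockA (nlft α F) z =
        ∑ k ∈ Finset.Icc (c - d) 0, (z : ℂ) ^ k • mFourierCoeff (blockA (nlft α F)) k) ∧
    (∀ z : Circle, blockB (nlft α F) z =
        ∑ k ∈ Finset.Icc c d, (z : ℂ) ^ k • mFourierCoeff (blockB (nlft α F)) k) ∧
    (∀ z : Circle, blockC (nlft α F) z =
        ∑ k ∈ Finset.Icc (-d) (-c), (z : ℂ) ^ k • mFourierCoeff (blockC (nlft α F)) k) ∧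
    (∀ z : Circle, blockD (nlft α F) z =
        ∑ k ∈ Finset.Icc 0 (d - c), (z : ℂ) ^ k • mFourierCoeff (blockD (nlft α F)) k) ∧
    mFourierCoeff (blockA (nlft α F)) 0 =
      (((Finset.Icc c d).sort (· ≤ ·)).map fun j => (Yc α (F j)).toBlocks₁₁).prod ∧
    mFourierCoeff (blockD (nlft α F)) 0 =
      (((Finset.Icc c d).sort (· ≤ ·)).map fun j => (Yc α (F j)).toBlocks₂₂).prod ∧
    Triangular (α 0) (mFourierCoeff (blockA (nlft α F)) 0) ∧
    Triangular (α 1) (mFourierCoeff (blockD (nlft α F)) 0) ∧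
    (c = 0 →
      mFourierCoeff (blockB (nlft α F)) 0 * (mFourierCoeff (blockD (nlft α F)) 0)⁻¹ =
        (Yc α (F 0)).toBlocks₁₂ * ((Yc α (F 0)).toBlocks₂₂)⁻¹ ∧
      mFourierCoeff (blockC (nlft α F)) 0 * (mFourierCoeff (blockA (nlft α F)) 0)⁻¹ =
        (Yc α (F 0)).toBlocks₂₁ * ((Yc α (F 0)).toBlocks₁₁)⁻¹) := by
  have hcd' : c ≤ d + 1 := by omega
  obtain ⟨hA, hB, hC, hD⟩ := nlftOn_isLaurentPolyOn α F hcd'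
  rw [min_eq_left (by omega)] at hA
  rw [max_eq_left (by omega)] at hD
  rw [nlft_eq_nlftOn α F hsupp]
  refine ⟨hA.eq_sum_mFourierCoeff, hB.eq_sum_mFourierCoeff, hC.eq_sum_mFourierCoeff,
    hD.eq_sum_mFourierCoeff, mFourierCoeff_blockA_nlftOn_zero α F hcd',
    mFourierCoeff_blockD_nlftOn_zero α F hcd',
    triangular_mFourierCoeff_blockA_nlftOn_zero α F hcd',
    triangular_mFourierCoeff_blockD_nlftOn_zero α F hcd', ?_⟩
  rintro rfl
  exact ⟨mFourierCoeff_blockB_nlftOn_mul_inv α F hcd,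
    by simpa using mFourierCoeff_blockC_nlftOn_mul_inv α F hcd⟩

/-- Frequency supports, constant Fourier coefficients, and the layer-stripping identity
for the NLFT of a sequence supported in `[c, d]`. -/
theorem statement_8 (n : ℕ) (hn : 1 ≤ n) (α : Fin 2 → Fin 2) (c d : ℤ) (hcd : c ≤ d)
    (F : ℤ → Mat n) (hF : ∀ j, Contractive (F j))
    (hsupp : ∀ j : ℤ, j ∉ Finset.Icc c d → F j = 0) :
    (∀ z : Circle, blockA (nlft α F) z =
        ∑ k ∈ Finset.Icc (c - d) 0, (z : ℂ) ^ k • mFourierCoeff (blockA (nlft α F)) k) ∧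
    (∀ z : Circle, blockB (nlft α F) z =
        ∑ k ∈ Finset.Icc c d, (z : ℂ) ^ k • mFourierCoeff (blockB (nlft α F)) k) ∧
    (∀ z : Circle, blockC (nlft α F) z =
        ∑ k ∈ Finset.Icc (-d) (-c), (z : ℂ) ^ k • mFourierCoeff (blockC (nlft α F)) k) ∧
    (∀ z : Circle, blockD (nlft α F) z =
        ∑ k ∈ Finset.Icc 0 (d - c), (z : ℂ) ^ k • mFourierCoeff (blockD (nlft α F)) k) ∧
    mFourierCoeff (blockA (nlft α F)) 0 =
      (((Finset.Icc c d).sort (· ≤ ·)).map fun j => (Yc α (F j)).toBlocks₁₁).prod ∧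
    mFourierCoeff (blockD (nlft α F)) 0 =
      (((Finset.Icc c d).sort (· ≤ ·)).map fun j => (Yc α (F j)).toBlocks₂₂).prod ∧
    Triangular (α 0) (mFourierCoeff (blockA (nlft α F)) 0) ∧
    Triangular (α 1) (mFourierCoeff (blockD (nlft α F)) 0) ∧
    (c = 0 →
      mFourierCoeff (blockB (nlft α F)) 0 * (mFourierCoeff (blockD (nlft α F)) 0)⁻¹ =
        (Yc α (F 0)).toBlocks₁₂ * ((Yc α (F 0)).toBlocks₂₂)⁻¹ ∧
      mFourierCoeff (blockC (nlft α F)) 0 * (mFourierCoeff (blockA (nlft α F)) 0)⁻¹ =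
        (Yc α (F 0)).toBlocks₂₁ * ((Yc α (F 0)).toBlocks₁₁)⁻¹) :=
  statement_8_general n α c d hcd F hsupp

end NLFT
end
end
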